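/- Let Q ∈ ℝ^{N×N}, κ > 0, and let (x, y) : [0, T] → ℝ^N × ℝ^N be a differentiable solution of x'(t) = Qᵀx(t) + κ(x(t)ᵀy(t))x(t) − κ·diag(y(t))·x(t), y'(t) = Qᵀy(t) + κ(x(t)ᵀy(t))y(t) − κ·diag(x(t))·y(t), with x(0) = y(0). Then x(t) = y(t) for all t ∈ [0, T]; that is, the diagonal set S₀ = {(x, y) : x = y} is invariant under the flow. -/

import Mathlib

open Matrix Set

/-!
The difference `z = x - y` of the two components solves the linear equation
`z' = Qᵀ z + κ (x ⬝ᵥ y) z`, because the interaction terms `diag(y) x` and `diag(x) y` are both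
the pointwise product of `x` and `y` and cancel. The coefficient is continuous, hence bounded
on `[0, T]`, so Grönwall's inequality forces `z = 0` from `z 0 = 0`.
-/

theorem Matrix.diagonal_mulVec_comm {n R : Type*} [Fintype n] [DecidableEq n] [CommSemiring R]
    (v w : n → R) : diagonal v *ᵥ w = diagonal w *ᵥ v := by
  ext i
  simp only [mulVec_diagonal, mul_comm]

theorem Matrix.mulVec_add_smul_sub_diagonal_sub_swap {n R : Type*} [Fintype n] [DecidableEq n]
    [CommRing R] (P : Matrix n n R) (c κ : R) (v w : n → R) :
    (P *ᵥ v + c • v - κ • diagonal w *ᵥ v) - (P *ᵥ w + c • w - κ • diagonal v *ᵥ w) =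
      P *ᵥ (v - w) + c • (v - w) := by
  rw [diagonal_mulVec_comm w v, mulVec_sub, smul_sub]
  abel

theorem HasDerivWithinAt.Ici_of_Icc {E : Type*} [NormedAddCommGroup E] [NormedSpace ℝ E]
    {f : ℝ → E} {f' : E} {a b t : ℝ} (hf : HasDerivWithinAt f f' (Icc a b) t) (ht : t ∈ Ico a b) :
    HasDerivWithinAt f f' (Ici t) t :=
  hf.mono_of_mem_nhdsWithin <|
    Filter.mem_of_superset (Icc_mem_nhdsGE_of_mem ⟨le_rfl, ht.2⟩) (Icc_subset_Icc_left ht.1)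

theorem eq_zero_of_hasDerivWithinAt_clm_add_smul {E : Type*} [NormedAddCommGroup E]
    [NormedSpace ℝ E] {z : ℝ → E} {A : E →L[ℝ] E} {c : ℝ → ℝ} {a b : ℝ}
    (hc : ContinuousOn c (Icc a b))
    (hz : ∀ t ∈ Icc a b, HasDerivWithinAt z (A (z t) + c t • z t) (Icc a b) t)
    (ha : z a = 0) : ∀ t ∈ Icc a b, z t = 0 := by
  obtain ⟨M, hM⟩ := isCompact_Icc.exists_bound_of_continuousOn hc
  refine eq_zero_of_abs_deriv_le_mul_abs_self_of_eq_zero_right (K := ‖A‖ + M)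
    (fun t ht => (hz t ht).continuousWithinAt)
    (fun t ht => (hz t (Ico_subset_Icc_self ht)).Ici_of_Icc ht) ha fun t ht => ?_
  calc ‖A (z t) + c t • z t‖
      ≤ ‖A‖ * ‖z t‖ + ‖c t‖ * ‖z t‖ :=
        (norm_add_le _ _).trans (add_le_add (A.le_opNorm _) (norm_smul _ _).le)
    _ ≤ ‖A‖ * ‖z t‖ + M * ‖z t‖ := by gcongr; exact hM t (Ico_subset_Icc_self ht)
    _ = (‖A‖ + M) * ‖z t‖ := by ring

theorem diagonal_invariant_general (N : ℕ) (Q : Matrix (Fin N) (Fin N) ℝ)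
    (κ : ℝ) (T : ℝ) (x y : ℝ → (Fin N → ℝ))
    (hdx : ∀ t ∈ Set.Icc (0 : ℝ) T, HasDerivWithinAt x
      (Qᵀ.mulVec (x t) + (κ * (x t ⬝ᵥ y t)) • x t
        - κ • (Matrix.diagonal (y t)).mulVec (x t)) (Set.Icc 0 T) t)
    (hdy : ∀ t ∈ Set.Icc (0 : ℝ) T, HasDerivWithinAt y
      (Qᵀ.mulVec (y t) + (κ * (x t ⬝ᵥ y t)) • y t
        - κ • (Matrix.diagonal (x t)).mulVec (y t)) (Set.Icc 0 T) t)
    (h0 : x 0 = y 0) :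
    ∀ t ∈ Set.Icc (0 : ℝ) T, x t = y t := by
  have hxc : ContinuousOn x (Icc 0 T) := fun t ht => (hdx t ht).continuousWithinAt
  have hyc : ContinuousOn y (Icc 0 T) := fun t ht => (hdy t ht).continuousWithinAt
  have hc : ContinuousOn (fun t => κ * (x t ⬝ᵥ y t)) (Icc 0 T) := by
    simp only [dotProduct]
    fun_prop
  have hdiff : ∀ t ∈ Icc 0 T, HasDerivWithinAt (x - y)
      (Qᵀ.mulVecLin.toContinuousLinearMap ((x - y) t) + (κ * (x t ⬝ᵥ y t)) • (x - y) t)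
      (Icc 0 T) t := fun t ht => by
    have h := (hdx t ht).sub (hdy t ht)
    rwa [mulVec_add_smul_sub_diagonal_sub_swap] at h
  intro t ht
  exact sub_eq_zero.1 <|
    eq_zero_of_hasDerivWithinAt_clm_add_smul hc hdiff (sub_eq_zero.2 h0) t ht

/-- the diagonal set `S₀ = {(x,y) : x = y}` is invariant under the
interaction ODE: a solution with `x(0) = y(0)` satisfies `x(t) = y(t)` on `[0,T]`. -/
theorem diagonal_invariant (N : ℕ) (Q : Matrix (Fin N) (Fin N) ℝ)
    (κ : ℝ) (hκ : 0 < κ) (T : ℝ) (hT : 0 ≤ T) (x y : ℝ → (Fin N → ℝ))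
    (hdx : ∀ t ∈ Set.Icc (0 : ℝ) T, HasDerivWithinAt x
      (Qᵀ.mulVec (x t) + (κ * (x t ⬝ᵥ y t)) • x t
        - κ • (Matrix.diagonal (y t)).mulVec (x t)) (Set.Icc 0 T) t)
    (hdy : ∀ t ∈ Set.Icc (0 : ℝ) T, HasDerivWithinAt y
      (Qᵀ.mulVec (y t) + (κ * (x t ⬝ᵥ y t)) • y t
        - κ • (Matrix.diagonal (x t)).mulVec (y t)) (Set.Icc 0 T) t)
    (h0 : x 0 = y 0) :
    ∀ t ∈ Set.Icc (0 : ℝ) T, x t = y t :=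
  diagonal_invariant_general N Q κ T x y hdx hdy h0
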